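/- arXiv:0705.1613 — 3 statements merged into one kernel-verified Lean document; each statement's English description precedes it below -/
import Mathlib

section
/- If G is a connected, non-complete finite simple graph, then so(G) ≤ d₂(G). -/
/-- `S` is a separator of `a` and `b` in `G`: it avoids `a,b` and meets every walk. -/
def SimpleGraph.IsSep {V : Type*} (G : SimpleGraph V) (a b : V) (S : Set V) : Prop :=
  a ∉ S ∧ b ∉ S ∧ ∀ p : G.Walk a b, ∃ v ∈ S, v ∈ p.support

/-- `S` is a minimal separator of `a` and `b` in `G`. -/
def SimpleGraph.IsMinSep {V : Type*} (G : SimpleGraph V) (a b : V) (S : Set V) : Prop :=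
  G.IsSep a b S ∧ ∀ T ⊂ S, ¬ G.IsSep a b T

/-- minimum cardinality of a minimal separator of `a` and `b`. -/
noncomputable def SimpleGraph.pairSepOrder {V : Type*} (G : SimpleGraph V) (a b : V) : ℕ :=
  sInf {n | ∃ S : Set V, G.IsMinSep a b S ∧ S.ncard = n}

/-- separability order: max over non-adjacent pairs of the minimum size of a minimal separator. -/
noncomputable def SimpleGraph.sepOrder {V : Type*} (G : SimpleGraph V) : ℕ :=
  sSup {n | ∃ a b : V, a ≠ b ∧ ¬ G.Adj a b ∧ n = G.pairSepOrder a b}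

/-- maximum degree (via `Set.ncard` of neighborhoods). -/
noncomputable def SimpleGraph.maxDeg {V : Type*} (G : SimpleGraph V) : ℕ :=
  sSup {n | ∃ v : V, n = (G.neighborSet v).ncard}

/-- degree two of a vertex: number of neighbors having degree at least 2. -/
noncomputable def SimpleGraph.deg2 {V : Type*} (G : SimpleGraph V) (a : V) : ℕ :=
  {γ : V | G.Adj a γ ∧ 2 ≤ (G.neighborSet γ).ncard}.ncard

/-- degree two of a graph. -/
noncomputable def SimpleGraph.maxDeg2 {V : Type*} (G : SimpleGraph V) : ℕ :=
  sSup {n | ∃ v : V, n = G.deg2 v}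

/-- Every walk from `a` to a non-adjacent `b` hits a neighbor of `a` with degree ≥ 2. -/
lemma walk_hits_deg2 {V : Type*} [Fintype V] (G : SimpleGraph V) (a b : V)
    (hne : a ≠ b) (hab : ¬ G.Adj a b) :
    ∀ n (p : G.Walk a b), p.length ≤ n →
      ∃ v, (G.Adj a v ∧ 2 ≤ (G.neighborSet v).ncard) ∧ v ∈ p.support := by
  intro n
  induction n with
  | zero =>
    intro p hp
    cases p with
    | nil => exact absurd rfl hne
    | cons h q => simp [SimpleGraph.Walk.length_cons] at hp
  | succ n ih =>
    intro p hp
    cases p with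
    | nil => exact absurd rfl hne
    | cons h q =>
      rename_i c
      by_cases hc : 2 ≤ (G.neighborSet c).ncard
      · exact ⟨c, ⟨h, hc⟩, by simp⟩
      · -- neighborSet c has at most 1 element and contains a
        have ha : a ∈ G.neighborSet c := h.symm
        have honly : ∀ x ∈ G.neighborSet c, x = a := by
          intro x hx
          by_contra hxa
          exact hc ((Set.one_lt_ncard (G.neighborSet c).toFinite).mpr
            ⟨x, hx, a, ha, hxa⟩)
        cases q with
        | nil => exact absurd h hab
        | cons h2 q' =>
          rename_i d
          have hd : d = a := honly d h2
          subst hd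
          have hlen : q'.length ≤ n := by
            simp only [SimpleGraph.Walk.length_cons] at hp
            omega
          obtain ⟨v, hv, hvs⟩ := ih q' hlen
          exact ⟨v, hv, by simp [SimpleGraph.Walk.support_cons]; tauto⟩

/-- Every separator contains a minimal separator. -/
lemma exists_minSep {V : Type*} [Fintype V] (G : SimpleGraph V) (a b : V) :
    ∀ n (S : Set V), S.ncard ≤ n → G.IsSep a b S →
      ∃ T ⊆ S, G.IsMinSep a b T := by
  intro n
  induction n with
  | zero =>
    intro S hS hsep
    have hS0 : S = ∅ := by
      rw [← Set.ncard_eq_zero S.toFinite]; omega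
    subst hS0
    exact ⟨∅, subset_rfl, hsep, fun T hT _ => hT.not_subset (Set.empty_subset T) |>.elim⟩
  | succ n ih =>
    intro S hS hsep
    by_cases h : ∃ T, T ⊂ S ∧ G.IsSep a b T
    · obtain ⟨T, hTS, hT⟩ := h
      have hlt : T.ncard < S.ncard := Set.ncard_lt_ncard hTS S.toFinite
      obtain ⟨U, hUT, hU⟩ := ih T (by omega) hT
      exact ⟨U, hUT.trans hTS.subset, hU⟩
    · exact ⟨S, subset_rfl, hsep, fun T hT hsepT => h ⟨T, hT, hsepT⟩⟩

/-- For a connected non-complete graph, `so(G) ≤ d₂(G)`. -/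
theorem stmt8 {V : Type*} [Fintype V] (G : SimpleGraph V)
    (hconn : G.Connected) (hnc : ∃ a b : V, a ≠ b ∧ ¬ G.Adj a b) :
    G.sepOrder ≤ G.maxDeg2 := by
  have hbdd : BddAbove {n | ∃ v : V, n = G.deg2 v} := by
    have : {n | ∃ v : V, n = G.deg2 v} = Set.range G.deg2 := by
      ext x; simp [eq_comm]
    rw [this]
    exact (Set.finite_range _).bddAbove
  apply csSup_le
  · obtain ⟨a, b, hne, hab⟩ := hnc
    exact ⟨G.pairSepOrder a b, a, b, hne, hab, rfl⟩
  · rintro n ⟨a, b, hne, hab, rfl⟩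
    set S : Set V := {γ : V | G.Adj a γ ∧ 2 ≤ (G.neighborSet γ).ncard} with hSdef
    have hsep : G.IsSep a b S := by
      refine ⟨by simp [hSdef], by simp only [hSdef, Set.mem_setOf_eq]; tauto, ?_⟩
      intro p
      obtain ⟨v, hv, hvs⟩ := walk_hits_deg2 G a b hne hab p.length p le_rfl
      exact ⟨v, hv, hvs⟩
    obtain ⟨T, hTS, hTmin⟩ := exists_minSep G a b S.ncard S le_rfl hsep
    have h1 : G.pairSepOrder a b ≤ T.ncard := Nat.sInf_le ⟨T, hTmin, rfl⟩
    have h2 : T.ncard ≤ S.ncard := Set.ncard_le_ncard hTS S.toFinite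
    have h3 : S.ncard = G.deg2 a := rfl
    have h4 : G.deg2 a ≤ G.maxDeg2 := le_csSup hbdd ⟨a, rfl⟩
    omega
end

section
/- Let G = (V, E) be a connected non-complete finite simple graph with so(G) = m > 0, and let P be a probability distribution on a product space indexed by V, perfectly Markov with respect to G: for all disjoint A, B, S with A, B nonempty and S nonempty, S separates A and B in G if and only if X_A ⊥⊥ X_B | X_S. Define the graph G_m = (V, E_m) by: α ≁_{G_m} β iff there exists S ⊆ V \ {α, β} with |S| = m and X_α ⊥⊥ X_β | X_S. Then G_m = G. -/
/-- `S` separates the sets `A` and `B` in `G`: every walk from `A` to `B` meets `S`. -/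
def SimpleGraph.SetSep {V : Type*} (G : SimpleGraph V) (A B S : Set V) : Prop :=
  ∀ a ∈ A, ∀ b ∈ B, ∀ p : G.Walk a b, ∃ v ∈ S, v ∈ p.support

/-- The conditional-independence relation `CI` is perfectly Markov w.r.t. `G`:
for disjoint `A`, `B` nonempty and `S` nonempty, separation is equivalent to
conditional independence. -/
def PerfectMarkov {V : Type*} (G : SimpleGraph V) (CI : Set V → Set V → Set V → Prop) : Prop :=
  ∀ A B S : Set V, A.Nonempty → B.Nonempty → S.Nonempty →
    Disjoint A B → Disjoint A S → Disjoint B S →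
    (G.SetSep A B S ↔ CI A B S)

/-- the `k`-graph `G_k`: `a ≁ b` iff `X_a ⟂⟂ X_b | X_S` for some `S ⊆ V \ {a,b}` with `|S| = k`. -/
def kGraph {V : Type*} (CI : Set V → Set V → Set V → Prop) (k : ℕ) : SimpleGraph V where
  Adj a b := a ≠ b ∧
    ¬ ∃ S : Set V, a ∉ S ∧ b ∉ S ∧ S.ncard = k ∧ (CI {a} {b} S ∨ CI {b} {a} S)
  symm := ⟨fun a b => fun ⟨hne, h⟩ =>
    ⟨hne.symm, fun ⟨S, hb, ha, hc, hci⟩ => h ⟨S, ha, hb, hc, hci.symm⟩⟩⟩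
  loopless := ⟨fun a => fun ⟨hne, _⟩ => hne rfl⟩

/-- the `k`-partial graph `G_k^p`: `a ≁ b` iff `X_a ⟂⟂ X_b | X_S` for some `S ⊆ V \ {a,b}`
with `|S| ≤ k`. -/
def kpGraph {V : Type*} (CI : Set V → Set V → Set V → Prop) (k : ℕ) : SimpleGraph V where
  Adj a b := a ≠ b ∧
    ¬ ∃ S : Set V, a ∉ S ∧ b ∉ S ∧ S.ncard ≤ k ∧ (CI {a} {b} S ∨ CI {b} {a} S)
  symm := ⟨fun a b => fun ⟨hne, h⟩ =>
    ⟨hne.symm, fun ⟨S, hb, ha, hc, hci⟩ => h ⟨S, ha, hb, hc, hci.symm⟩⟩⟩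
  loopless := ⟨fun a => fun ⟨hne, _⟩ => hne rfl⟩


/-!
For non-adjacent `a, b` a minimal separator of minimum size has at most `so(G) = m` vertices, and
`V \ {a, b}` has at least `m` vertices because the pair realising `so(G)` has an `m`-vertex
separator disjoint from it. Enlarging inside `V \ {a, b}` gives a separator of exactly `m` vertices,
hence `X_a ⊥⊥ X_b | X_S` and `a ≁ b` in `G_m`. For adjacent `a, b` the one-edge walk meets no
`S ⊆ V \ {a, b}`, and `m > 0` makes every such `S` of size `m` nonempty, so perfect Markovness
excludes `X_a ⊥⊥ X_b | X_S`.
-/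

namespace SimpleGraph

variable {V : Type*} {G : SimpleGraph V} {a b : V} {S T : Set V}

theorem Adj.not_isSep (h : G.Adj a b) : ¬ G.IsSep a b S := by
  rintro ⟨ha, hb, hsep⟩
  obtain ⟨v, hv, hvp⟩ := hsep (Walk.cons h Walk.nil)
  simp only [Walk.support_cons, Walk.support_nil, List.mem_cons, List.not_mem_nil,
    or_false] at hvp
  rcases hvp with rfl | rfl
  exacts [ha hv, hb hv]

theorem IsSep.mono (h : G.IsSep a b S) (hST : S ⊆ T) (ha : a ∉ T) (hb : b ∉ T) :
    G.IsSep a b T :=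
  ⟨ha, hb, fun p => (h.2.2 p).imp fun _ hv => ⟨hST hv.1, hv.2⟩⟩

theorem isSep_compl_pair (hne : a ≠ b) (hnadj : ¬ G.Adj a b) : G.IsSep a b {a, b}ᶜ := by
  refine ⟨by simp, by simp, fun p => ?_⟩
  cases p with
  | nil => exact absurd rfl hne
  | @cons _ x _ hax _ =>
    refine ⟨x, fun hx => ?_, by simp⟩
    rcases hx with rfl | rfl
    exacts [G.loopless.irrefl _ hax, hnadj hax]

theorem IsSep.subset_compl_pair (h : G.IsSep a b S) : S ⊆ {a, b}ᶜ := by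
  rintro v hv (rfl | rfl)
  exacts [h.1 hv, h.2.1 hv]

theorem ncard_compl_pair_add_two [Finite V] (hne : a ≠ b) :
    ({a, b}ᶜ : Set V).ncard + 2 = Nat.card V := by
  rw [← Set.ncard_pair hne, add_comm, Set.ncard_add_ncard_compl]

theorem IsSep.ncard_add_two_le [Finite V] (h : G.IsSep a b S) (hne : a ≠ b) :
    S.ncard + 2 ≤ Nat.card V :=
  ncard_compl_pair_add_two hne ▸ Nat.add_le_add_right (Set.ncard_le_ncard h.subset_compl_pair) 2

theorem isMinSep_iff_minimal : G.IsMinSep a b S ↔ Minimal (G.IsSep a b) S := by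
  rw [minimal_iff_forall_lt]
  rfl

theorem exists_isMinSep [Finite V] (hne : a ≠ b) (hnadj : ¬ G.Adj a b) :
    ∃ S, G.IsMinSep a b S := by
  obtain ⟨S, -, hS⟩ :=
    exists_minimal_le_of_wellFoundedLT (G.IsSep a b) _ (isSep_compl_pair hne hnadj)
  exact ⟨S, isMinSep_iff_minimal.2 hS⟩

theorem exists_isMinSep_ncard_eq_pairSepOrder [Finite V] (hne : a ≠ b) (hnadj : ¬ G.Adj a b) :
    ∃ S, G.IsMinSep a b S ∧ S.ncard = G.pairSepOrder a b := by
  obtain ⟨S, hS⟩ := exists_isMinSep hne hnadj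
  exact Nat.sInf_mem (s := {n | ∃ S, G.IsMinSep a b S ∧ S.ncard = n}) ⟨S.ncard, S, hS, rfl⟩

theorem pairSepOrder_add_two_le [Finite V] (hne : a ≠ b) (hnadj : ¬ G.Adj a b) :
    G.pairSepOrder a b + 2 ≤ Nat.card V := by
  obtain ⟨S, hS, hcard⟩ := exists_isMinSep_ncard_eq_pairSepOrder hne hnadj
  exact hcard ▸ hS.1.ncard_add_two_le hne

theorem exists_isSep_ncard_eq [Finite V] (hne : a ≠ b) (hnadj : ¬ G.Adj a b) {k : ℕ}
    (hk : G.pairSepOrder a b ≤ k) (hkV : k + 2 ≤ Nat.card V) :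
    ∃ S, G.IsSep a b S ∧ S.ncard = k := by
  obtain ⟨S₀, hS₀, hcard⟩ := exists_isMinSep_ncard_eq_pairSepOrder hne hnadj
  obtain ⟨S, hS₀S, hSab, hS⟩ := Set.exists_subsuperset_card_eq hS₀.1.subset_compl_pair
    (hcard ▸ hk) (by have := ncard_compl_pair_add_two (V := V) hne; omega)
  exact ⟨S, hS₀.1.mono hS₀S (fun ha => hSab ha (.inl rfl)) (fun hb => hSab hb (.inr rfl)), hS⟩

theorem bddAbove_pairSepOrder [Finite V] :
    BddAbove {n | ∃ a b : V, a ≠ b ∧ ¬ G.Adj a b ∧ n = G.pairSepOrder a b} :=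
  ⟨Nat.card V, by
    rintro n ⟨a, b, hne, hnadj, rfl⟩
    exact (Nat.le_add_right _ 2).trans (pairSepOrder_add_two_le hne hnadj)⟩

theorem pairSepOrder_le_sepOrder [Finite V] (hne : a ≠ b) (hnadj : ¬ G.Adj a b) :
    G.pairSepOrder a b ≤ G.sepOrder :=
  le_csSup bddAbove_pairSepOrder ⟨a, b, hne, hnadj, rfl⟩

theorem sepOrder_add_two_le [Finite V] (hpos : 0 < G.sepOrder) : G.sepOrder + 2 ≤ Nat.card V := by
  have hne : {n | ∃ a b : V, a ≠ b ∧ ¬ G.Adj a b ∧ n = G.pairSepOrder a b}.Nonempty :=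
    Set.nonempty_iff_ne_empty.2 fun h => hpos.ne' (by rw [sepOrder, h, csSup_empty, bot_eq_zero])
  obtain ⟨a, b, hab, hnadj, hm⟩ := Nat.sSup_mem hne bddAbove_pairSepOrder
  exact (congrArg (· + 2) hm).trans_le (pairSepOrder_add_two_le hab hnadj)

theorem exists_isSep_ncard_eq_sepOrder [Finite V] (hpos : 0 < G.sepOrder) (hne : a ≠ b)
    (hnadj : ¬ G.Adj a b) : ∃ S, G.IsSep a b S ∧ S.ncard = G.sepOrder :=
  exists_isSep_ncard_eq hne hnadj (pairSepOrder_le_sepOrder hne hnadj) (sepOrder_add_two_le hpos)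

theorem setSep_singleton_iff : G.SetSep {a} {b} S ↔ ∀ p : G.Walk a b, ∃ v ∈ S, v ∈ p.support := by
  simp [SetSep]

end SimpleGraph

open SimpleGraph in
theorem PerfectMarkov.ci_singleton_iff_isSep {V : Type*} {G : SimpleGraph V}
    {CI : Set V → Set V → Set V → Prop} (hpm : PerfectMarkov G CI) {a b : V} {S : Set V}
    (hne : a ≠ b) (ha : a ∉ S) (hb : b ∉ S) (hS : S.Nonempty) :
    CI {a} {b} S ↔ G.IsSep a b S := by
  rw [← hpm {a} {b} S (Set.singleton_nonempty a) (Set.singleton_nonempty b) hS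
    (Set.disjoint_singleton.2 hne) (Set.disjoint_singleton_left.2 ha)
    (Set.disjoint_singleton_left.2 hb), setSep_singleton_iff]
  exact ⟨fun h => ⟨ha, hb, h⟩, fun h => h.2.2⟩

theorem stmt11_general {V : Type*} [Fintype V] (G : SimpleGraph V)
    (CI : Set V → Set V → Set V → Prop) (hpm : PerfectMarkov G CI)
    (m : ℕ) (hso : G.sepOrder = m) (hpos : 0 < m) :
    kGraph CI m = G := by
  subst hso
  ext a b
  refine ⟨fun ⟨hne, hno⟩ => ?_, fun hadj => ⟨hadj.ne, ?_⟩⟩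
  · by_contra hnadj
    obtain ⟨S, hS, hcard⟩ := G.exists_isSep_ncard_eq_sepOrder hpos hne hnadj
    have hSne : S.Nonempty := Set.nonempty_of_ncard_ne_zero (by omega)
    exact hno ⟨S, hS.1, hS.2.1, hcard,
      .inl ((hpm.ci_singleton_iff_isSep hne hS.1 hS.2.1 hSne).2 hS)⟩
  · rintro ⟨S, ha, hb, hcard, hci | hci⟩
    all_goals have hSne : S.Nonempty := Set.nonempty_of_ncard_ne_zero (by omega)
    · exact hadj.not_isSep ((hpm.ci_singleton_iff_isSep hadj.ne ha hb hSne).1 hci)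
    · exact hadj.symm.not_isSep ((hpm.ci_singleton_iff_isSep hadj.ne.symm hb ha hSne).1 hci)

/-- If `G` is connected non-complete with `so(G) = m > 0` and `P` (encoded by the
conditional independence relation `CI`) is perfectly Markov to `G`, then the
`m`-graph `G_m` equals `G`. -/
theorem stmt11 {V : Type*} [Fintype V] (G : SimpleGraph V)
    (CI : Set V → Set V → Set V → Prop) (hpm : PerfectMarkov G CI)
    (hconn : G.Connected) (hnc : ∃ a b : V, a ≠ b ∧ ¬ G.Adj a b)
    (m : ℕ) (hso : G.sepOrder = m) (hpos : 0 < m) :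
    kGraph CI m = G :=
  stmt11_general G CI hpm m hso hpos
end

section
/- Let G = (V, E) be a finite simple graph and P a distribution perfectly Markov to G. For 1 ≤ m ≤ k ≤ |V| − 2, define G_j = (V, E_j) by α ≁_{G_j} β iff there exists S ⊆ V \ {α, β} with |S| = j and X_α ⊥⊥ X_β | X_S. Then E_k ⊆ E_m. -/
/-!
Under perfect Markovianity, a pair `a ≠ b` is non-adjacent in `G_j` exactly when it has a graph
separator of size `j` avoiding `a` and `b`; this needs `j ≥ 1`, as perfect Markovianity says
nothing about the empty conditioning set. A separator stays a separator when enlarged,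
so one of size `m` can be padded, inside `V \ {a, b}`, to one of any size `k ≤ |V| - 2`.
-/

namespace SimpleGraph

variable {V : Type*} {G : SimpleGraph V}

theorem SetSep.mono {A B S T : Set V} (h : G.SetSep A B S) (hST : S ⊆ T) : G.SetSep A B T :=
  fun a ha b hb p => (h a ha b hb p).imp fun _ hv => ⟨hST hv.1, hv.2⟩

theorem SetSep.symm {A B S : Set V} (h : G.SetSep A B S) : G.SetSep B A S := by
  intro b hb a ha p
  obtain ⟨v, hvS, hvp⟩ := h a ha b hb p.reverse
  exact ⟨v, hvS, by simpa using hvp⟩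

end SimpleGraph

theorem PerfectMarkov.ci_pair_iff_setSep {V : Type*} {G : SimpleGraph V}
    {CI : Set V → Set V → Set V → Prop} (hpm : PerfectMarkov G CI) {a b : V} {S : Set V}
    (hab : a ≠ b) (haS : a ∉ S) (hbS : b ∉ S) (hS : S.Nonempty) :
    (CI {a} {b} S ∨ CI {b} {a} S) ↔ G.SetSep {a} {b} S := by
  have hdab : Disjoint ({a} : Set V) {b} := Set.disjoint_singleton.mpr hab
  have hdaS : Disjoint ({a} : Set V) S := Set.disjoint_singleton_left.mpr haS
  have hdbS : Disjoint ({b} : Set V) S := Set.disjoint_singleton_left.mpr hbS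
  have hab_iff := hpm {a} {b} S ⟨a, rfl⟩ ⟨b, rfl⟩ hS hdab hdaS hdbS
  have hba_iff := hpm {b} {a} S ⟨b, rfl⟩ ⟨a, rfl⟩ hS hdab.symm hdbS hdaS
  exact ⟨fun h => h.elim hab_iff.mpr fun h => (hba_iff.mpr h).symm,
    fun h => Or.inl (hab_iff.mp h)⟩

theorem PerfectMarkov.not_kGraph_adj_iff {V : Type*} {G : SimpleGraph V}
    {CI : Set V → Set V → Set V → Prop} (hpm : PerfectMarkov G CI) {j : ℕ} (hj : 1 ≤ j)
    {a b : V} (hab : a ≠ b) :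
    ¬ (kGraph CI j).Adj a b ↔
      ∃ S : Set V, a ∉ S ∧ b ∉ S ∧ S.ncard = j ∧ G.SetSep {a} {b} S := by
  have hne {S : Set V} (hS : S.ncard = j) : S.Nonempty :=
    Set.nonempty_of_ncard_ne_zero (by omega)
  simp only [kGraph, hab, ne_eq, not_false_eq_true, true_and, not_not]
  exact exists_congr fun S => and_congr_right fun haS => and_congr_right fun hbS =>
    and_congr_right fun hS => hpm.ci_pair_iff_setSep hab haS hbS (hne hS)

theorem Set.exists_superset_ncard_eq_of_notMem_pair {V : Type*} [Fintype V] {a b : V}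
    (hab : a ≠ b) {S : Set V} (haS : a ∉ S) (hbS : b ∉ S) {k : ℕ} (hSk : S.ncard ≤ k)
    (hk : k ≤ Fintype.card V - 2) :
    ∃ T : Set V, S ⊆ T ∧ a ∉ T ∧ b ∉ T ∧ T.ncard = k := by
  have hS : S ⊆ ({a, b} : Set V)ᶜ := by
    rintro x hx (rfl | rfl)
    exacts [haS hx, hbS hx]
  have hcard : (({a, b} : Set V)ᶜ).ncard = Fintype.card V - 2 := by
    have h := Set.ncard_add_ncard_compl ({a, b} : Set V)
    rw [Set.ncard_pair hab, Nat.card_eq_fintype_card] at h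
    omega
  obtain ⟨T, hST, hT, hTk⟩ := Set.exists_superset_subset_encard_eq (k := (k : ℕ∞)) hS
    (by rw [← S.toFinite.cast_ncard_eq]; exact_mod_cast hSk)
    (by rw [← Set.toFinite _ |>.cast_ncard_eq, hcard]; exact_mod_cast hk)
  refine ⟨T, hST, fun h => hT h (by simp), fun h => hT h (by simp), ?_⟩
  rw [← T.toFinite.cast_ncard_eq] at hTk
  exact_mod_cast hTk

/-- If `P` is perfectly Markov to `G` and `1 ≤ m ≤ k ≤ |V| − 2`, then `E_k ⊆ E_m`. -/
theorem stmt12 {V : Type*} [Fintype V] (G : SimpleGraph V)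
    (CI : Set V → Set V → Set V → Prop) (hpm : PerfectMarkov G CI)
    (m k : ℕ) (h1 : 1 ≤ m) (h2 : m ≤ k) (h3 : k ≤ Fintype.card V - 2) :
    kGraph CI k ≤ kGraph CI m := by
  intro a b hadj
  by_contra hm
  obtain ⟨S, haS, hbS, hSm, hsep⟩ := (hpm.not_kGraph_adj_iff h1 hadj.ne).mp hm
  obtain ⟨T, hST, haT, hbT, hTk⟩ :=
    Set.exists_superset_ncard_eq_of_notMem_pair hadj.ne haS hbS (hSm ▸ h2) h3
  exact (hpm.not_kGraph_adj_iff (h1.trans h2) hadj.ne).mpr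
    ⟨T, haT, hbT, hTk, hsep.mono hST⟩ hadj
end
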